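/- arXiv:1312.3927 — 5 statements merged into one kernel-verified Lean document; each statement's English description precedes it below -/
import Mathlib

section
/- There exists a simple set: a set A ⊆ ℕ such that A is computably enumerable, the complement ℕ \ A is infinite, and A ∩ W ≠ ∅ for every infinite computably enumerable set W ⊆ ℕ. -/
/-- A set of natural numbers is computably enumerable if it is the domain of a
partial computable function. -/
def CE (S : Set ℕ) : Prop :=
  ∃ f : ℕ →. ℕ, Nat.Partrec f ∧ S = f.Dom

/-!
Post's construction. For each index `e`, dovetail the enumeration of `W_e` and put into `A` the
first element `x > 2e` that appears. Then `A` is c.e., it meets every infinite `W_e` (which has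
elements beyond `2e`), and `A ∩ [0, 2m]` has at most `m` elements, since only the indices `e < m`
can contribute there and each contributes at most one; so `Aᶜ` is infinite.
-/

open Nat.Partrec Code Denumerable

theorem ce_setOf_exists {p : ℕ → ℕ → Bool} (hp : Computable₂ p) : CE {x | ∃ n, p x n} := by
  refine ⟨fun x => Nat.rfind fun n => Part.some (p x n),
    Partrec.nat_iff.1 (Partrec.rfind hp.partrec₂), ?_⟩
  ext x
  exact Iff.trans (by simp) Nat.rfind_dom.symm

theorem ce_ran {g : ℕ →. ℕ} (hg : Nat.Partrec g) : CE g.ran := by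
  obtain ⟨c, rfl⟩ := exists_code.1 hg
  have hp : Computable₂ fun (x n : ℕ) => decide (evaln n.unpair.2 c n.unpair.1 = some x) :=
    (Primrec.eq.comp
      (primrec_evaln.comp (((Primrec.snd.comp (Primrec.unpair.comp Primrec.snd)).pair
        (Primrec.const c)).pair (Primrec.fst.comp (Primrec.unpair.comp Primrec.snd))))
      (Primrec.option_some.comp Primrec.fst)).decide.to_comp
  convert ce_setOf_exists hp using 1
  ext x
  simp only [PFun.ran, Set.mem_ofPred_eq, decide_eq_true_eq, evaln_complete, Option.mem_def]
  constructor
  · rintro ⟨e, k, h⟩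
    exact ⟨Nat.pair e k, by simpa using h⟩
  · rintro ⟨n, h⟩
    exact ⟨_, _, h⟩

theorem PFun.encard_image_le {α β : Type*} (f : α →. β) (s : Set α) :
    (f.image s).encard ≤ s.encard := by
  obtain hα | hα := isEmpty_or_nonempty α
  · simp [PFun.image_def]
  choose! g hgs hgf using fun b (hb : b ∈ f.image s) => (f.mem_image b s).1 hb
  exact Set.encard_le_encard_of_injOn hgs
    fun b hb b' hb' h => Part.mem_unique (hgf b hb) (h ▸ hgf b' hb')

theorem infinite_compl_of_encard_inter_Iic_le {A : Set ℕ}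
    (h : ∀ m, (A ∩ Set.Iic (2 * m)).encard ≤ m) : Aᶜ.Infinite := by
  intro hfin
  obtain ⟨N, hN⟩ := hfin.bddAbove
  have hcover : Set.Iic (2 * (N + 1)) ⊆ (A ∩ Set.Iic (2 * (N + 1))) ∪ Set.Iic N := by
    intro x hx
    by_cases hxA : x ∈ A
    · exact Or.inl ⟨hxA, hx⟩
    · exact Or.inr (hN hxA)
  have hcount : ((2 * (N + 1) + 1 : ℕ) : ℕ∞) ≤ (N + 1 : ℕ) + (N + 1 : ℕ) :=
    calc ((2 * (N + 1) + 1 : ℕ) : ℕ∞) = (Set.Iic (2 * (N + 1))).encard := by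
          rw [← (Set.finite_Iic _).cast_ncard_eq, Set.ncard_Iic_nat]
      _ ≤ (A ∩ Set.Iic (2 * (N + 1))).encard + (Set.Iic N).encard :=
          (Set.encard_le_encard hcover).trans (Set.encard_union_le _ _)
      _ ≤ (N + 1 : ℕ) + (N + 1 : ℕ) := by
          rw [← (Set.finite_Iic N).cast_ncard_eq, Set.ncard_Iic_nat]
          gcongr
          exact h (N + 1)
  norm_cast at hcount
  omega

namespace Post

/-- Stage `n = ⟪k, x⟫` of the search for `e` finds `x` if `x > 2e` and `x` shows up in `W_e`
within `k` steps. -/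
def stage (e n : ℕ) : Option ℕ :=
  if 2 * e < n.unpair.2 ∧ (evaln n.unpair.1 (ofNat Code e) n.unpair.2).isSome then
    some n.unpair.2 else none

def pick : ℕ →. ℕ := fun e => Nat.rfindOpt (stage e)

theorem primrec_stage : Primrec₂ stage := by
  have hx : Primrec fun p : ℕ × ℕ => p.2.unpair.2 :=
    Primrec.snd.comp (Primrec.unpair.comp Primrec.snd)
  have hhalt : Primrec fun p : ℕ × ℕ =>
      (evaln p.2.unpair.1 (ofNat Code p.1) p.2.unpair.2).isSome :=
    Primrec.option_isSome.comp <| primrec_evaln.comp <|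
      ((Primrec.fst.comp (Primrec.unpair.comp Primrec.snd)).pair
        ((Primrec.ofNat Code).comp Primrec.fst)).pair hx
  exact Primrec.ite
    ((Primrec.nat_lt.comp (Primrec.nat_mul.comp (Primrec.const 2) Primrec.fst) hx).and
      (Primrec.primrecPred (hhalt.of_eq fun _ => by simp)))
    (Primrec.option_some.comp hx) (Primrec.const none)

theorem partrec_pick : Nat.Partrec pick :=
  Partrec.nat_iff.1 (Partrec.rfindOpt primrec_stage.to_comp)

theorem lt_and_mem_dom_of_mem_pick {e x : ℕ} (h : x ∈ pick e) :
    2 * e < x ∧ x ∈ (eval (ofNat Code e)).Dom := by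
  obtain ⟨n, hn⟩ := Nat.rfindOpt_spec h
  simp only [stage, Option.mem_def, Option.ite_none_right_eq_some, Option.some.injEq] at hn
  obtain ⟨⟨hlt, hhalt⟩, rfl⟩ := hn
  obtain ⟨y, hy⟩ := Option.isSome_iff_exists.1 hhalt
  exact ⟨hlt, (PFun.mem_dom _ _).2 ⟨y, evaln_sound hy⟩⟩

theorem pick_dom {e x : ℕ} (hx : x ∈ (eval (ofNat Code e)).Dom) (hlt : 2 * e < x) :
    (pick e).Dom := by
  obtain ⟨y, hy⟩ := (PFun.mem_dom _ _).1 hx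
  obtain ⟨k, hk⟩ := evaln_complete.1 hy
  refine Nat.rfindOpt_dom.2 ⟨Nat.pair k x, x, ?_⟩
  simp [stage, hlt, Option.isSome_iff_exists.2 ⟨y, hk⟩]

theorem encard_ran_pick_inter_Iic_le (m : ℕ) : (pick.ran ∩ Set.Iic (2 * m)).encard ≤ m :=
  calc (pick.ran ∩ Set.Iic (2 * m)).encard ≤ (pick.image (Set.Iio m)).encard := by
        refine Set.encard_le_encard fun x ⟨⟨e, he⟩, hx⟩ => (pick.mem_image x _).2 ⟨e, ?_, he⟩
        have := (lt_and_mem_dom_of_mem_pick he).1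
        simp only [Set.mem_Iic, Set.mem_Iio] at hx ⊢
        omega
    _ ≤ (Set.Iio m).encard := pick.encard_image_le _
    _ = m := by rw [← (Set.finite_Iio m).cast_ncard_eq, Set.ncard_Iio_nat]

theorem ran_pick_inter_nonempty {W : Set ℕ} (hW : CE W) (hinf : W.Infinite) :
    (pick.ran ∩ W).Nonempty := by
  obtain ⟨f, hf, rfl⟩ := hW
  obtain ⟨c, rfl⟩ := exists_code.1 hf
  obtain ⟨x, hx, hlt⟩ := hinf.exists_gt (2 * Encodable.encode c)
  obtain ⟨y, hy⟩ := Part.dom_iff_mem.1 (pick_dom (by rwa [ofNat_encode]) hlt)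
  refine ⟨y, ⟨_, hy⟩, ?_⟩
  simpa using (lt_and_mem_dom_of_mem_pick hy).2

end Post

/-- There exists a simple set: a computably enumerable set `A ⊆ ℕ` with infinite
complement that meets every infinite computably enumerable set. -/
theorem exists_simple_set :
    ∃ A : Set ℕ, CE A ∧ (Aᶜ).Infinite ∧
      ∀ W : Set ℕ, CE W → W.Infinite → (A ∩ W).Nonempty :=
  ⟨Post.pick.ran, ce_ran Post.partrec_pick,
    infinite_compl_of_encard_inter_Iic_le Post.encard_ran_pick_inter_Iic_le,
    fun _ => Post.ran_pick_inter_nonempty⟩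
end

section
/- There exists a computably enumerable set A ⊆ ℕ such that A ∩ W ≠ ∅ for every infinite computably enumerable set W ⊆ ℕ, and such that for every i ≥ 1 the finite set A ∩ {0, 1, …, 2i} has strictly fewer than i elements (hence ℕ \ A is infinite). -/
open Nat.Partrec (Code)

theorem ce_setOf_exists_of_primrec₂ {p : ℕ → ℕ → Bool} (hp : Primrec₂ p) :
    CE {x | ∃ k, p x k = true} := by
  refine ⟨fun x => Nat.rfind fun k => p x k,
    Partrec.nat_iff.1 (Partrec.rfind hp.to_comp.partrec₂), Set.ext fun x => ?_⟩
  constructor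
  · rintro ⟨k, hk⟩
    obtain ⟨n, hn, -⟩ := Nat.rfind_min' hk
    exact Part.dom_iff_mem.2 ⟨n, hn⟩
  · intro hx
    exact ⟨_, Part.mem_some_iff.1 (Nat.rfind_spec (Part.get_mem hx)) |>.symm⟩

theorem ce_setOf_exists_mem {g : ℕ →. ℕ} (hg : Nat.Partrec g) : CE {x | ∃ e, x ∈ g e} := by
  obtain ⟨c, rfl⟩ := Code.exists_code.1 hg
  have hp : Primrec₂ fun x k : ℕ => decide (Code.evaln k.unpair.2 c k.unpair.1 = some x) :=
    Primrec.eq.decide.comp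
      (Code.primrec_evaln.comp (((Primrec.snd.comp (Primrec.unpair.comp Primrec.snd)).pair
        (Primrec.const c)).pair (Primrec.fst.comp (Primrec.unpair.comp Primrec.snd))))
      (Primrec.option_some.comp Primrec.fst) |>.to₂
  convert ce_setOf_exists_of_primrec₂ hp using 1
  ext x
  simp only [Set.mem_ofPred_eq, decide_eq_true_eq, Code.evaln_complete]
  constructor
  · rintro ⟨e, k, hk⟩
    exact ⟨Nat.pair e k, by simpa using hk⟩
  · rintro ⟨k, hk⟩
    exact ⟨_, _, hk⟩

theorem Set.ncard_le_of_forall_exists_lt_mem {α : Type*} {s : Set α} {g : ℕ →. α} {m : ℕ}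
    (h : ∀ x ∈ s, ∃ e < m, x ∈ g e) : s.ncard ≤ m := by
  choose! idx hlt hmem using h
  calc s.ncard ≤ (Set.Iio m).ncard :=
        Set.ncard_le_ncard_of_injOn idx hlt fun x hx y hy hxy =>
          Part.mem_unique (hmem x hx) (hxy ▸ hmem y hy)
    _ = m := Set.ncard_Iio_nat m

/-- `n` encodes a pair (input, step bound). -/
def postWitness (e n : ℕ) : Bool :=
  (Code.evaln n.unpair.2 (Denumerable.ofNat Code e) n.unpair.1).isSome &&
    decide (2 * e + 2 < n.unpair.1)

def postSelect (e : ℕ) : Part ℕ :=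
  (Nat.rfind fun n => postWitness e n).map fun n => n.unpair.1

theorem primrec₂_postWitness : Primrec₂ postWitness := by
  have hrun : Primrec₂ fun e n : ℕ =>
      (Code.evaln n.unpair.2 (Denumerable.ofNat Code e) n.unpair.1).isSome :=
    Primrec.option_isSome.comp (Code.primrec_evaln.comp
      (((Primrec.snd.comp (Primrec.unpair.comp Primrec.snd)).pair
        ((Primrec.ofNat Code).comp Primrec.fst)).pair
        (Primrec.fst.comp (Primrec.unpair.comp Primrec.snd))))
  have hbig : Primrec₂ fun e n : ℕ => decide (2 * e + 2 < n.unpair.1) :=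
    Primrec.nat_lt.decide.comp
      (Primrec.nat_add.comp (Primrec.nat_mul.comp (Primrec.const 2) Primrec.fst)
        (Primrec.const 2))
      (Primrec.fst.comp (Primrec.unpair.comp Primrec.snd))
  exact Primrec.and.comp hrun hbig

theorem partrec_postSelect : Nat.Partrec postSelect :=
  Partrec.nat_iff.1 <| (Partrec.rfind primrec₂_postWitness.to_comp.partrec₂).map
    (Primrec.fst.comp (Primrec.unpair.comp Primrec.snd)).to_comp

theorem mem_postSelect {e x : ℕ} (hx : x ∈ postSelect e) :
    x ∈ (Code.eval (Denumerable.ofNat Code e)).Dom ∧ 2 * e + 2 < x := by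
  obtain ⟨n, hn, rfl⟩ := (Part.mem_map_iff _).1 hx
  obtain ⟨hrun, hbig⟩ : (Code.evaln n.unpair.2 (Denumerable.ofNat Code e) n.unpair.1).isSome ∧
      2 * e + 2 < n.unpair.1 := by
    simpa [postWitness] using Nat.rfind_spec hn
  obtain ⟨y, hy⟩ := Option.isSome_iff_exists.1 hrun
  exact ⟨Part.dom_iff_mem.2 ⟨y, Code.evaln_sound hy⟩, hbig⟩

theorem postSelect_dom {c : Code} {x : ℕ} (hx : x ∈ (Code.eval c).Dom)
    (hbig : 2 * Encodable.encode c + 2 < x) : (postSelect (Encodable.encode c)).Dom := by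
  obtain ⟨y, hy⟩ := Part.dom_iff_mem.1 hx
  obtain ⟨k, hk⟩ := Code.evaln_complete.1 hy
  have : postWitness (Encodable.encode c) (Nat.pair x k) = true := by
    simpa [postWitness, hbig, Option.isSome_iff_exists] using ⟨y, hk⟩
  obtain ⟨n, hn, -⟩ := Nat.rfind_min' this
  exact Part.dom_iff_mem.2 ⟨_, Part.mem_map _ hn⟩

/-- There is a computably enumerable set `A ⊆ ℕ` meeting every infinite computably
enumerable set, such that for every `i ≥ 1` the set `A ∩ {0,…,2i}` has strictly
fewer than `i` elements (hence `ℕ \ A` is infinite). -/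
theorem exists_simple_set_with_card_bound :
    ∃ A : Set ℕ, CE A ∧
      (∀ W : Set ℕ, CE W → W.Infinite → (A ∩ W).Nonempty) ∧
      ∀ i : ℕ, 1 ≤ i → (A ∩ Set.Iic (2 * i)).ncard < i := by
  refine ⟨{x | ∃ e, x ∈ postSelect e}, ce_setOf_exists_mem partrec_postSelect, ?_, ?_⟩
  · rintro W ⟨g, hg, rfl⟩ hW
    obtain ⟨c, rfl⟩ := Code.exists_code.1 hg
    obtain ⟨x, hxW, hbig⟩ := hW.exists_gt (2 * Encodable.encode c + 2)
    have hsel := Part.get_mem (postSelect_dom hxW hbig)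
    refine ⟨_, ⟨_, hsel⟩, ?_⟩
    simpa using (mem_postSelect hsel).1
  · intro i hi
    refine (Set.ncard_le_of_forall_exists_lt_mem (g := postSelect) (m := i - 1) ?_).trans_lt
      (by omega)
    rintro x ⟨⟨e, hx⟩, hle : x ≤ 2 * i⟩
    have hbig := (mem_postSelect hx).2
    exact ⟨e, by omega, hx⟩
end

section
/- For every prime number p and every real number x, one has x ≠ √p if and only if there exist a natural number r and a positive natural number q such that either (x < r/q and r² < p·q²) or (x > r/q and r² > p·q²). -/
lemma frac_lt_sqrt_iff (p r q : ℕ) (hq : 0 < q) :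
    (r : ℝ) / (q : ℝ) < Real.sqrt p ↔ r ^ 2 < p * q ^ 2 := by
  have hq' : (0:ℝ) < q := by exact_mod_cast hq
  rw [Real.lt_sqrt (by positivity), div_pow, div_lt_iff₀ (by positivity)]
  constructor
  · intro h; exact_mod_cast h
  · intro h; exact_mod_cast h

lemma sqrt_lt_frac_iff (p r q : ℕ) (hq : 0 < q) :
    Real.sqrt p < (r : ℝ) / (q : ℝ) ↔ p * q ^ 2 < r ^ 2 := by
  have hq' : (0:ℝ) < q := by exact_mod_cast hq
  rw [← not_le, ← not_le, not_iff_not, Real.le_sqrt (by positivity) (by positivity),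
    div_pow, div_le_iff₀ (by positivity)]
  constructor
  · intro h; exact_mod_cast h
  · intro h; exact_mod_cast h

lemma rat_frac_eq (t : ℚ) (ht : 0 < t.num) :
    ((t.num.toNat : ℝ)) / (t.den : ℝ) = (t : ℝ) := by
  rw [Rat.cast_def]
  congr 1
  exact_mod_cast Int.toNat_of_nonneg ht.le

/-- For a prime `p`, a real `x` differs from `√p` iff some fraction `r/q` of
naturals (with `q > 0`) separates `x` from `√p`, witnessed by the condition
`(x < r/q and r² < p·q²)` or `(x > r/q and r² > p·q²)`. -/
theorem ne_sqrt_prime_iff_separating_fraction (p : ℕ) (hp : p.Prime) (x : ℝ) :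
    x ≠ Real.sqrt p ↔
      ∃ (r q : ℕ), 0 < q ∧
        ((x < (r : ℝ) / (q : ℝ) ∧ r ^ 2 < p * q ^ 2) ∨
         (x > (r : ℝ) / (q : ℝ) ∧ r ^ 2 > p * q ^ 2)) := by
  have hps : 0 < Real.sqrt p := Real.sqrt_pos.mpr (by exact_mod_cast hp.pos)
  constructor
  · intro hne
    rcases lt_or_gt_of_ne hne with h | h
    · obtain ⟨t, ht1, ht2⟩ := exists_rat_btwn (max_lt h hps)
      have ht0 : (0:ℝ) < (t:ℝ) := lt_of_le_of_lt (le_max_right x 0) ht1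
      have htnum : 0 < t.num := Rat.num_pos.mpr (by exact_mod_cast ht0)
      have key := rat_frac_eq t htnum
      refine ⟨t.num.toNat, t.den, t.pos, Or.inl ⟨?_, ?_⟩⟩
      · rw [key]; exact lt_of_le_of_lt (le_max_left x 0) ht1
      · exact (frac_lt_sqrt_iff p _ _ t.pos).mp (key ▸ ht2)
    · obtain ⟨t, ht1, ht2⟩ := exists_rat_btwn h
      have ht0 : (0:ℝ) < (t:ℝ) := hps.trans ht1
      have htnum : 0 < t.num := Rat.num_pos.mpr (by exact_mod_cast ht0)
      have key := rat_frac_eq t htnum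
      refine ⟨t.num.toNat, t.den, t.pos, Or.inr ⟨?_, ?_⟩⟩
      · rw [gt_iff_lt, key]; exact ht2
      · exact (sqrt_lt_frac_iff p _ _ t.pos).mp (key ▸ ht1)
  · rintro ⟨r, q, hq, ⟨hx, hr⟩ | ⟨hx, hr⟩⟩
    · exact ne_of_lt (hx.trans ((frac_lt_sqrt_iff p r q hq).mpr hr))
    · exact ne_of_gt (((sqrt_lt_frac_iff p r q hq).mpr hr).trans hx)
end

section
/- For every finite set S of pairs of integers (k, l) such that k·√2 + l ≥ 0 for all (k, l) ∈ S and k·√2 + l > 0 for all (k, l) in a further finite set S' of pairs of integers, there exist positive natural numbers n and m such that k·(n/m)·π + l ≥ 0 for all (k, l) ∈ S and k·(n/m)·π + l > 0 for all (k, l) ∈ S'. -/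
/-- If `k ≠ 0` then `k·√2 + l ≠ 0`. -/
lemma sqrt_two_affine_ne_zero (k l : ℤ) (hk : k ≠ 0) :
    (k : ℝ) * Real.sqrt 2 + (l : ℝ) ≠ 0 := by
  intro h
  apply irrational_sqrt_two
  have hk' : (k : ℝ) ≠ 0 := Int.cast_ne_zero.mpr hk
  have : Real.sqrt 2 = ((-l : ℚ) / (k : ℚ) : ℚ) := by
    push_cast
    field_simp
    linarith
  exact ⟨_, this.symm⟩

/-- Every finite system of non-strict and strict affine inequalities with integer
coefficients satisfied by `√2` is also satisfied by some positive rational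
multiple `(n/m)·π` of `π`. -/
theorem affine_system_sqrt_two_transfer_to_rat_mul_pi
    (S S' : Finset (ℤ × ℤ))
    (hS : ∀ kl ∈ S, (kl.1 : ℝ) * Real.sqrt 2 + (kl.2 : ℝ) ≥ 0)
    (hS' : ∀ kl ∈ S', (kl.1 : ℝ) * Real.sqrt 2 + (kl.2 : ℝ) > 0) :
    ∃ n m : ℕ, 0 < n ∧ 0 < m ∧
      (∀ kl ∈ S, (kl.1 : ℝ) * ((n : ℝ) / (m : ℝ)) * Real.pi + (kl.2 : ℝ) ≥ 0) ∧
      (∀ kl ∈ S', (kl.1 : ℝ) * ((n : ℝ) / (m : ℝ)) * Real.pi + (kl.2 : ℝ) > 0) := by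
  classical
  set T : Finset (ℤ × ℤ) := (S ∪ S').filter (fun kl => kl.1 ≠ 0) with hT
  set U : Set ℝ := Set.Ioi 0 ∩ ⋂ kl ∈ T, {x : ℝ | (kl.1 : ℝ) * x + (kl.2 : ℝ) > 0} with hU
  have hUopen : IsOpen U := by
    apply IsOpen.inter isOpen_Ioi
    apply isOpen_biInter_finset
    intro kl _
    exact isOpen_lt continuous_const (by continuity)
  have hmem : Real.sqrt 2 ∈ U := by
    constructor
    · exact Real.sqrt_pos.mpr (by norm_num)
    · simp only [Set.mem_iInter]
      intro kl hkl
      rw [hT, Finset.mem_filter, Finset.mem_union] at hkl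
      have hne := sqrt_two_affine_ne_zero kl.1 kl.2 hkl.2
      rcases hkl.1 with h | h
      · exact lt_of_le_of_ne (hS kl h) (Ne.symm hne)
      · exact hS' kl h
  obtain ⟨ε, hε, hball⟩ := Metric.isOpen_iff.mp hUopen _ hmem
  have hπ := Real.pi_pos
  obtain ⟨q, hq1, hq2⟩ := exists_rat_btwn
    (show (Real.sqrt 2 - ε) / Real.pi < (Real.sqrt 2 + ε) / Real.pi from
      (div_lt_div_iff_of_pos_right hπ).mpr (by linarith))
  have hx : (q : ℝ) * Real.pi ∈ U := by
    apply hball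
    rw [Metric.mem_ball, Real.dist_eq, abs_lt]
    constructor
    · nlinarith [(div_lt_iff₀ hπ).mp hq1]
    · nlinarith [(lt_div_iff₀ hπ).mp hq2]
  obtain ⟨hxpos, hxT⟩ := hx
  have hq0 : 0 < q := by
    by_contra h
    push_neg at h
    have h1 : (q : ℝ) ≤ 0 := by exact_mod_cast h
    have h2 : (0:ℝ) < q * Real.pi := Set.mem_Ioi.mp hxpos
    nlinarith
  refine ⟨q.num.toNat, q.den, ?_, q.pos, ?_, ?_⟩
  · have := Rat.num_pos.mpr hq0
    omega
  all_goals
    have hcast : ((q.num.toNat : ℝ) / (q.den : ℝ)) = (q : ℝ) := by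
      have := Rat.num_pos.mpr hq0
      rw [Rat.cast_def]
      congr 1
      exact_mod_cast Int.toNat_of_nonneg this.le
    rw [Set.mem_iInter₂] at hxT
    intro kl hkl
    rcases eq_or_ne kl.1 0 with h0 | h0
  · -- S, kl.1 = 0
    have := hS kl hkl
    rw [h0] at this ⊢
    simpa using by simpa using this
  · have := hxT kl (by rw [hT, Finset.mem_filter]; exact ⟨Finset.mem_union_left _ hkl, h0⟩)
    rw [hcast, mul_assoc]
    exact le_of_lt this
  · have := hS' kl hkl
    rw [h0] at this ⊢
    simpa using by simpa using this
  · have := hxT kl (by rw [hT, Finset.mem_filter]; exact ⟨Finset.mem_union_right _ hkl, h0⟩)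
    rw [hcast, mul_assoc]
    exact this
end

section
/- For every prime number p and every finite set S of pairs of integers (k, l), there exist positive natural numbers n and m such that for all (k, l) ∈ S: if k·√p + l > 0 then k·(n/m)·π + l > 0; if k·√p + l < 0 then k·(n/m)·π + l < 0; and if k·√p + l = 0 then k·(n/m)·π + l = 0. In other words, some positive rational multiple of π realizes exactly the same sign pattern as √p on any prescribed finite family of integer affine forms. -/
/-- For a prime `p`, some positive rational multiple `(n/m)·π` of `π` realizes
exactly the same sign pattern as `√p` on any prescribed finite family of integer
affine forms `k·x + l`. -/
theorem sign_pattern_sqrt_prime_realized_by_rat_mul_pi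
    (p : ℕ) (hp : p.Prime) (S : Finset (ℤ × ℤ)) :
    ∃ n m : ℕ, 0 < n ∧ 0 < m ∧
      ∀ kl ∈ S,
        ((kl.1 : ℝ) * Real.sqrt p + (kl.2 : ℝ) > 0 →
          (kl.1 : ℝ) * ((n : ℝ) / (m : ℝ)) * Real.pi + (kl.2 : ℝ) > 0) ∧
        ((kl.1 : ℝ) * Real.sqrt p + (kl.2 : ℝ) < 0 →
          (kl.1 : ℝ) * ((n : ℝ) / (m : ℝ)) * Real.pi + (kl.2 : ℝ) < 0) ∧
        ((kl.1 : ℝ) * Real.sqrt p + (kl.2 : ℝ) = 0 →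
          (kl.1 : ℝ) * ((n : ℝ) / (m : ℝ)) * Real.pi + (kl.2 : ℝ) = 0) := by
  have hirr : Irrational (Real.sqrt p) := (Nat.Prime.irrational_sqrt hp)
  have hpi := Real.pi_pos
  have hsqrt_pos : 0 < Real.sqrt p := Real.sqrt_pos.mpr (by exact_mod_cast hp.pos)
  -- the key: if k√p+l = 0 then k = 0 and l = 0
  have hzero : ∀ k l : ℤ, (k : ℝ) * Real.sqrt p + (l : ℝ) = 0 → k = 0 ∧ l = 0 := by
    intro k l h
    by_cases hk : k = 0
    · subst hk; simp at h; exact ⟨rfl, by exact_mod_cast h⟩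
    · exfalso
      have : Real.sqrt p = ((-l : ℚ) / (k : ℚ) : ℚ) := by
        have hk' : (k : ℝ) ≠ 0 := Int.cast_ne_zero.mpr hk
        push_cast
        field_simp
        linarith
      exact hirr ⟨_, this.symm⟩
  -- set of "nonzero" forms (with k ≠ 0)
  set T := S.filter (fun kl => kl.1 ≠ 0 ∧ (kl.1 : ℝ) * Real.sqrt p + (kl.2 : ℝ) ≠ 0) with hT
  set q₀ : ℝ := Real.sqrt p / Real.pi with hq₀
  have hq₀pos : 0 < q₀ := div_pos hsqrt_pos hpi
  -- get δ > 0 a uniform bound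
  have hδ : ∃ δ : ℝ, 0 < δ ∧ ∀ kl ∈ T,
      δ ≤ |(kl.1 : ℝ) * Real.sqrt p + (kl.2 : ℝ)| / ((|(kl.1 : ℝ)| + 1) * Real.pi) := by
    by_cases hTne : T.Nonempty
    · refine ⟨T.inf' hTne (fun kl => |(kl.1 : ℝ) * Real.sqrt p + (kl.2 : ℝ)| / ((|(kl.1 : ℝ)| + 1) * Real.pi)), ?_, ?_⟩
      · rw [Finset.lt_inf'_iff]
        intro kl hkl
        have := (Finset.mem_filter.mp hkl).2.2
        exact div_pos (abs_pos.mpr this) (mul_pos (by positivity) hpi)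
      · intro kl hkl; exact Finset.inf'_le _ hkl
    · exact ⟨1, one_pos, fun kl hkl => absurd ⟨kl, hkl⟩ hTne⟩
  obtain ⟨δ, hδpos, hδle⟩ := hδ
  -- pick a rational in (q₀, q₀ + δ)
  obtain ⟨q, hq1, hq2⟩ := exists_rat_btwn (show q₀ < q₀ + δ by linarith)
  have hqpos : 0 < q := by
    have : (0 : ℝ) < (q : ℝ) := lt_trans hq₀pos hq1
    exact_mod_cast this
  refine ⟨q.num.toNat, q.den, ?_, q.pos, ?_⟩
  · have := Rat.num_pos.mpr hqpos
    omega
  · have hq_eq : ((q.num.toNat : ℝ)) / (q.den : ℝ) = (q : ℝ) := by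
      have hnum : (q.num.toNat : ℤ) = q.num := Int.toNat_of_nonneg (le_of_lt (Rat.num_pos.mpr hqpos))
      have : ((q.num.toNat : ℝ)) = ((q.num : ℤ) : ℝ) := by exact_mod_cast congrArg (fun z : ℤ => (z : ℝ)) hnum
      rw [this, Rat.cast_def]
    intro kl hkl
    rcases kl with ⟨k, l⟩
    simp only [hq_eq]
    by_cases hk : k = 0
    · subst hk; simp
    · by_cases hv : (k : ℝ) * Real.sqrt p + (l : ℝ) = 0
      · obtain ⟨hk0, _⟩ := hzero k l hv; exact absurd hk0 hk
      · have hklT : (k, l) ∈ T := Finset.mem_filter.mpr ⟨hkl, hk, hv⟩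
        have hb := hδle _ hklT
        -- |k·q·π + l - (k√p + l)| = |k|·π·|q - q₀| < |v|
        have hdist : |(k : ℝ) * (q : ℝ) * Real.pi + (l : ℝ) - ((k : ℝ) * Real.sqrt p + (l : ℝ))|
            < |(k : ℝ) * Real.sqrt p + (l : ℝ)| := by
          have h1 : (k : ℝ) * (q : ℝ) * Real.pi + (l : ℝ) - ((k : ℝ) * Real.sqrt p + (l : ℝ))
              = (k : ℝ) * Real.pi * ((q : ℝ) - q₀) := by
            rw [hq₀]; field_simp; ring
          rw [h1, abs_mul, abs_mul, abs_of_pos hpi]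
          have hqd : |(q : ℝ) - q₀| < δ := by
            rw [abs_of_pos (by linarith)]; linarith
          calc |(k : ℝ)| * Real.pi * |(q : ℝ) - q₀|
              < (|(k : ℝ)| + 1) * Real.pi * δ := by
                apply mul_lt_mul' ?_ hqd (abs_nonneg _) (by positivity)
                apply mul_le_mul_of_nonneg_right (by linarith [abs_nonneg (k:ℝ)]) hpi.le
            _ ≤ (|(k : ℝ)| + 1) * Real.pi *
                (|(k : ℝ) * Real.sqrt p + (l : ℝ)| / ((|(k : ℝ)| + 1) * Real.pi)) := by
                apply mul_le_mul_of_nonneg_left hb (by positivity)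
            _ = |(k : ℝ) * Real.sqrt p + (l : ℝ)| := by
                field_simp
        rw [abs_sub_lt_iff] at hdist
        constructor
        · intro hpos
          rw [abs_of_pos hpos] at hdist
          linarith [hdist.2]
        constructor
        · intro hneg
          rw [abs_of_neg hneg] at hdist
          linarith [hdist.1]
        · intro h; exact absurd h hv
end
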